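/- arXiv:1911.09700 — 4 statements merged into one kernel-verified Lean document; each statement's English description precedes it below -/
import Mathlib

section
/- Let A be an n×n matrix over the nonnegative reals with Tr(A) ≤ 1. Then a positive vector x ∈ ℝ^n satisfies the tropical inequality A ⊗ x ≤ x if and only if there exists a positive vector u ∈ ℝ^n such that x = A* ⊗ u. -/
open scoped NNReal

/-- Square matrices over the max-times semifield of nonnegative reals. -/
abbrev TMat (n : ℕ) := Matrix (Fin n) (Fin n) ℝ≥0

/-- Tropical (max-times) matrix product. -/
noncomputable def tmul {n : ℕ} (A B : TMat n) : TMat n :=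
  fun i j => Finset.univ.sup fun k => A i k * B k j

/-- Tropical (max-times) matrix-vector product. -/
noncomputable def tmulVec {n : ℕ} (A : TMat n) (x : Fin n → ℝ≥0) : Fin n → ℝ≥0 :=
  fun i => Finset.univ.sup fun j => A i j * x j

/-- Tropical identity matrix. -/
noncomputable def tId (n : ℕ) : TMat n := fun i j => if i = j then 1 else 0

/-- Tropical matrix powers. -/
noncomputable def tpow {n : ℕ} (A : TMat n) : ℕ → TMat n
  | 0 => tId n
  | k + 1 => tmul A (tpow A k)

/-- Tropical (entrywise max) matrix addition. -/
noncomputable def tadd {n : ℕ} (A B : TMat n) : TMat n := fun i j => A i j ⊔ B i j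

/-- Entrywise scalar multiplication. -/
noncomputable def tsmul {n : ℕ} (a : ℝ≥0) (A : TMat n) : TMat n := fun i j => a * A i j

/-- Tropical trace: tr A = max_i a_{ii}. -/
noncomputable def ttr {n : ℕ} (A : TMat n) : ℝ≥0 := Finset.univ.sup fun i => A i i

/-- Tropical "determinant": Tr(A) = max_{k=1..n} tr(A^k). -/
noncomputable def tTr {n : ℕ} (A : TMat n) : ℝ≥0 :=
  (Finset.Icc 1 n).sup fun k => ttr (tpow A k)

/-- Kleene star: entrywise max of A^0, ..., A^{n-1}. -/
noncomputable def tstar {n : ℕ} (A : TMat n) : TMat n :=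
  fun i j => (Finset.range n).sup fun k => tpow A k i j

/-- Tropical product of a finite chain of matrices F 0 ⊗ F 1 ⊗ ⋯ ⊗ F (k-1). -/
noncomputable def tchain {n : ℕ} : (k : ℕ) → (Fin k → TMat n) → TMat n
  | 0, _ => tId n
  | k + 1, F => tmul (F 0) (tchain k fun t => F t.succ)

/-- Tuples of k nonnegative integers with sum m. -/
def tuples (k m : ℕ) : Finset (Fin k → Fin (m + 1)) :=
  Finset.univ.filter fun f => (∑ t, (f t : ℕ)) = m

/-- Tuples of k integers from {0,1} with sum l. -/
def binTuples (k l : ℕ) : Finset (Fin k → Fin 2) :=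
  Finset.univ.filter fun j => (∑ t, (j t : ℕ)) = l

/-- The objective f_M(x) = max_{i,j} m_{ij} x_j / x_i. -/
noncomputable def fobj {n : ℕ} (M : TMat n) (x : Fin n → ℝ≥0) : ℝ≥0 :=
  Finset.univ.sup fun p : Fin n × Fin n => M p.1 p.2 * x p.2 / x p.1

/-- Spectral radius: λ = max_{k=1..n} (tr(A^k))^{1/k}. -/
noncomputable def specRad {n : ℕ} (A : TMat n) : ℝ≥0 :=
  (Finset.Icc 1 n).sup fun k => ttr (tpow A k) ^ ((1 : ℝ) / k)

/-- σ = max over k=1..n-1, m=1..n-k and tuples (i_1,…,i_k) with sum m of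
    (tr(A^{i_1} C ⋯ A^{i_k} C))^{1/m}. -/
noncomputable def sigmaC {n : ℕ} (A C : TMat n) : ℝ≥0 :=
  (Finset.Icc 1 (n - 1)).sup fun k =>
    (Finset.Icc 1 (n - k)).sup fun m =>
      (tuples k m).sup fun f =>
        ttr (tchain k fun t => tmul (tpow A (f t : ℕ)) C) ^ ((1 : ℝ) / m)

/-- r_{k,l,m} = max over tuples (i_1,…,i_k) with sum m and (j_1,…,j_k) ∈ {0,1}^k with
    sum l of tr(A^{i_1} B^{j_1} C^{1-j_1} ⋯ A^{i_k} B^{j_k} C^{1-j_k}). -/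
noncomputable def rklm {n : ℕ} (A B C : TMat n) (k l m : ℕ) : ℝ≥0 :=
  (tuples k m).sup fun f =>
    (binTuples k l).sup fun j =>
      ttr (tchain k fun t =>
        tmul (tpow A (f t : ℕ)) (tmul (tpow B (j t : ℕ)) (tpow C (1 - (j t : ℕ)))))

/-- G(s) = max_{k,m,l} r_{k,l,m}^{1/l} s^{-m/l}. -/
noncomputable def Gfun {n : ℕ} (A B C : TMat n) (s : ℝ≥0) : ℝ≥0 :=
  (Finset.Icc 1 (n - 1)).sup fun k =>
    (Finset.Icc 1 (n - k)).sup fun m =>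
      (Finset.Icc 1 k).sup fun l =>
        rklm A B C k l m ^ ((1 : ℝ) / l) * s ^ (-(m : ℝ) / l)

/-- H(t) = max_{k,m,l} r_{k,l,m}^{1/m} t^{-l/m}. -/
noncomputable def Hfun {n : ℕ} (A B C : TMat n) (t : ℝ≥0) : ℝ≥0 :=
  (Finset.Icc 1 (n - 1)).sup fun k =>
    (Finset.Icc 1 (n - k)).sup fun m =>
      (Finset.Icc 1 k).sup fun l =>
        rklm A B C k l m ^ ((1 : ℝ) / m) * t ^ (-(l : ℝ) / m)

/-- Unconstrained r_{k,m} = max over tuples (i_1,…,i_k) with sum m of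
    tr(A^{i_1} B ⋯ A^{i_k} B). -/
noncomputable def rkm {n : ℕ} (A B : TMat n) (k m : ℕ) : ℝ≥0 :=
  (tuples k m).sup fun f => ttr (tchain k fun t => tmul (tpow A (f t : ℕ)) B)

/-- Unconstrained G(s) = max_{k,m} r_{k,m}^{1/k} s^{-m/k}. -/
noncomputable def Gfun0 {n : ℕ} (A B : TMat n) (s : ℝ≥0) : ℝ≥0 :=
  (Finset.Icc 1 (n - 1)).sup fun k =>
    (Finset.Icc 1 (n - k)).sup fun m =>
      rkm A B k m ^ ((1 : ℝ) / k) * s ^ (-(m : ℝ) / k)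

/-- Unconstrained H(t) = max_{k,m} r_{k,m}^{1/m} t^{-k/m}. -/
noncomputable def Hfun0 {n : ℕ} (A B : TMat n) (t : ℝ≥0) : ℝ≥0 :=
  (Finset.Icc 1 (n - 1)).sup fun k =>
    (Finset.Icc 1 (n - k)).sup fun m =>
      rkm A B k m ^ ((1 : ℝ) / m) * t ^ (-(k : ℝ) / m)

/-- Pareto-minimal points of a set V ⊆ ℝ≥0 × ℝ≥0. -/
def ParetoMin (V : Set (ℝ≥0 × ℝ≥0)) (p : ℝ≥0 × ℝ≥0) : Prop :=
  p ∈ V ∧ ¬∃ q ∈ V, q.1 ≤ p.1 ∧ q.2 ≤ p.2 ∧ q ≠ p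

/-!
If `A ⊗ x ≤ x` then `A^k ⊗ x ≤ x` for every `k`, so `A* ⊗ x = x` and `u = x` works.
Conversely, `Tr(A) ≤ 1` says that every cycle of length at most `n` in the weighted digraph of
`A` has weight at most `1`. A path of length `m ≥ n` revisits a vertex within its first `n` steps;
cutting out that cycle does not decrease the weight, so by induction `A^m ≤ A*` for all `m`.
Hence `A ⊗ A* ≤ A*`, and every vector `A* ⊗ u` solves `A ⊗ x ≤ x`.
-/

open Finset

lemma exists_lt_le_map_eq {n : ℕ} (p : ℕ → Fin n) : ∃ s t, s < t ∧ t ≤ n ∧ p s = p t := by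
  obtain ⟨a, ha, b, hb, hab, heq⟩ := exists_ne_map_eq_of_card_lt_of_maps_to
    (s := range (n + 1)) (t := univ) (by simp) fun x _ => mem_univ (p x)
  rw [mem_range] at ha hb
  rcases hab.lt_or_gt with h | h
  · exact ⟨a, b, h, by omega, heq⟩
  · exact ⟨b, a, h, by omega, heq.symm⟩

section Powers

variable {n : ℕ} (A : TMat n)

lemma mul_le_tpow_succ (k : ℕ) (i j l : Fin n) : A i j * tpow A k j l ≤ tpow A (k + 1) i l :=
  le_sup (f := fun j => A i j * tpow A k j l) (mem_univ j)

lemma le_tpow_one (i j : Fin n) : A i j ≤ tpow A 1 i j := by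
  simpa [tpow, tId] using mul_le_tpow_succ A 0 i j j

lemma tpow_mul_tpow_le (a b : ℕ) (i v j : Fin n) :
    tpow A a i v * tpow A b v j ≤ tpow A (a + b) i j := by
  induction a generalizing i with
  | zero =>
    by_cases h : i = v
    · subst h; simp [tpow, tId]
    · simp [tpow, tId, h]
  | succ a ih =>
    rw [Nat.add_right_comm]
    change (univ.sup fun k => A i k * tpow A a k v) * _ ≤ tpow A (a + b + 1) i j
    rw [NNReal.finset_sup_mul]
    refine Finset.sup_le fun k _ => ?_
    calc A i k * tpow A a k v * tpow A b v j = A i k * (tpow A a k v * tpow A b v j) :=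
          mul_assoc _ _ _
      _ ≤ A i k * tpow A (a + b) k j := by gcongr; exact ih k
      _ ≤ tpow A (a + b + 1) i j := mul_le_tpow_succ A _ i k j

lemma prod_Ico_le_tpow (p : ℕ → Fin n) {a b : ℕ} (hab : a ≤ b) :
    ∏ t ∈ Ico a b, A (p t) (p (t + 1)) ≤ tpow A (b - a) (p a) (p b) := by
  induction b, hab using Nat.le_induction with
  | base => simp [tpow, tId]
  | succ b hab ih =>
    rw [prod_Ico_succ_top hab, Nat.sub_add_comm hab]
    calc (∏ t ∈ Ico a b, A (p t) (p (t + 1))) * A (p b) (p (b + 1))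
        ≤ tpow A (b - a) (p a) (p b) * tpow A 1 (p b) (p (b + 1)) := by
          gcongr
          exact le_tpow_one A _ _
      _ ≤ tpow A (b - a + 1) (p a) (p (b + 1)) := tpow_mul_tpow_le A _ _ _ _ _

lemma exists_path_tpow_eq (m : ℕ) {i j : Fin n} (h : tpow A m i j ≠ 0) :
    ∃ p : ℕ → Fin n, p 0 = i ∧ p m = j ∧
      tpow A m i j = ∏ t ∈ range m, A (p t) (p (t + 1)) := by
  induction m generalizing i with
  | zero =>
    have hij : i = j := by
      by_contra hij
      simp [tpow, tId, hij] at h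
    exact ⟨fun _ => i, rfl, hij, by simp [tpow, tId, hij]⟩
  | succ m ih =>
    obtain ⟨k, -, hk⟩ := exists_mem_eq_sup univ ⟨i, mem_univ i⟩ fun k => A i k * tpow A m k j
    change tpow A (m + 1) i j = _ at hk
    obtain ⟨p, hp0, hpm, hp⟩ := ih (right_ne_zero_of_mul (hk ▸ h))
    refine ⟨fun | 0 => i | t + 1 => p t, rfl, hpm, ?_⟩
    rw [hk, hp, ← hp0, prod_range_succ', mul_comm]

lemma tpow_apply_self_le_one (hA : tTr A ≤ 1) {c : ℕ} (hc : c ∈ Icc 1 n) (v : Fin n) :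
    tpow A c v v ≤ 1 :=
  calc tpow A c v v ≤ ttr (tpow A c) := le_sup (f := fun v => tpow A c v v) (mem_univ v)
    _ ≤ tTr A := le_sup (f := fun k => ttr (tpow A k)) hc
    _ ≤ 1 := hA

lemma tpow_le_tstar_of_lt {k : ℕ} (hk : k < n) (i j : Fin n) : tpow A k i j ≤ tstar A i j :=
  le_sup (f := fun k => tpow A k i j) (mem_range.2 hk)

lemma tpow_le_tstar (hA : tTr A ≤ 1) (m : ℕ) (i j : Fin n) : tpow A m i j ≤ tstar A i j := by
  induction m using Nat.strong_induction_on generalizing i j with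
  | _ m ih =>
  by_cases hm : m < n
  · exact tpow_le_tstar_of_lt A hm i j
  rcases eq_or_ne (tpow A m i j) 0 with h0 | h0
  · simp [h0]
  obtain ⟨p, rfl, rfl, hp⟩ := exists_path_tpow_eq A m h0
  obtain ⟨s, t, hst, htn, hps⟩ := exists_lt_le_map_eq p
  have hcycle : tpow A (t - s) (p s) (p t) ≤ 1 :=
    hps ▸ tpow_apply_self_le_one A hA (mem_Icc.2 ⟨by omega, by omega⟩) (p s)
  calc tpow A m (p 0) (p m) = ∏ k ∈ Ico 0 m, A (p k) (p (k + 1)) := by rw [hp, range_eq_Ico]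
    _ = (∏ k ∈ Ico 0 s, A (p k) (p (k + 1))) * (∏ k ∈ Ico s t, A (p k) (p (k + 1))) *
          ∏ k ∈ Ico t m, A (p k) (p (k + 1)) := by
        rw [prod_Ico_consecutive _ (Nat.zero_le s) hst.le,
          prod_Ico_consecutive _ (Nat.zero_le t) (by omega)]
    _ ≤ tpow A (s - 0) (p 0) (p s) * 1 * tpow A (m - t) (p t) (p m) := by
        gcongr
        · exact prod_Ico_le_tpow A p (Nat.zero_le s)
        · exact (prod_Ico_le_tpow A p hst.le).trans hcycle
        · exact prod_Ico_le_tpow A p (by omega)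
    _ ≤ tpow A (s + (m - t)) (p 0) (p m) := by
        rw [mul_one, Nat.sub_zero, ← hps]
        exact tpow_mul_tpow_le A _ _ _ _ _
    _ ≤ tstar A (p 0) (p m) := ih _ (by omega) _ _

lemma tmul_tstar_le (hA : tTr A ≤ 1) (i l : Fin n) : tmul A (tstar A) i l ≤ tstar A i l := by
  refine Finset.sup_le fun j _ => ?_
  rw [tstar, NNReal.mul_finset_sup]
  exact Finset.sup_le fun k _ => (mul_le_tpow_succ A k i j l).trans (tpow_le_tstar A hA _ i l)

end Powers

section Vectors

variable {n : ℕ}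

lemma tmulVec_tId (x : Fin n → ℝ≥0) : tmulVec (tId n) x = x := by
  funext i
  refine le_antisymm (Finset.sup_le fun j _ => ?_) ?_
  · by_cases h : i = j
    · subst h; simp [tId]
    · simp [tId, h]
  · simpa [tmulVec, tId] using le_sup (f := fun j => tId n i j * x j) (mem_univ i)

lemma tmulVec_tmul (A B : TMat n) (x : Fin n → ℝ≥0) :
    tmulVec (tmul A B) x = tmulVec A (tmulVec B x) := by
  funext i
  calc (univ.sup fun j => tmul A B i j * x j)
      = univ.sup fun j => univ.sup fun k => A i k * B k j * x j := by
        simp only [tmul, NNReal.finset_sup_mul]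
    _ = univ.sup fun k => univ.sup fun j => A i k * B k j * x j := Finset.sup_comm _ _ _
    _ = univ.sup fun k => A i k * tmulVec B x k := by
        simp only [tmulVec, NNReal.mul_finset_sup, mul_assoc]

lemma tmulVec_mono {A B : TMat n} {x y : Fin n → ℝ≥0} (hAB : ∀ i j, A i j ≤ B i j)
    (hxy : x ≤ y) :
    tmulVec A x ≤ tmulVec B y := fun i =>
  Finset.sup_le fun j _ => (mul_le_mul' (hAB i j) (hxy j)).trans
    (le_sup (f := fun j => B i j * y j) (mem_univ j))

lemma tmulVec_tpow_le {A : TMat n} {x : Fin n → ℝ≥0} (h : tmulVec A x ≤ x) (k : ℕ) :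
    tmulVec (tpow A k) x ≤ x := by
  induction k with
  | zero => exact (tmulVec_tId x).le
  | succ k ih =>
    rw [tpow, tmulVec_tmul]
    exact (tmulVec_mono (fun _ _ => le_rfl) ih).trans h

lemma tmulVec_tstar_eq_self {A : TMat n} {x : Fin n → ℝ≥0} (h : tmulVec A x ≤ x) :
    tmulVec (tstar A) x = x := by
  refine le_antisymm (fun i => Finset.sup_le fun j _ => ?_) fun i => ?_
  · rw [tstar, NNReal.finset_sup_mul]
    exact Finset.sup_le fun k _ =>
      (le_sup (f := fun j => tpow A k i j * x j) (mem_univ j)).trans (tmulVec_tpow_le h k i)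
  · calc x i = tmulVec (tpow A 0) x i := by rw [tpow, tmulVec_tId]
      _ ≤ tmulVec (tstar A) x i := tmulVec_mono (tpow_le_tstar_of_lt A i.pos) le_rfl i

lemma tmulVec_tmulVec_tstar_le {A : TMat n} (hA : tTr A ≤ 1) (u : Fin n → ℝ≥0) :
    tmulVec A (tmulVec (tstar A) u) ≤ tmulVec (tstar A) u := by
  rw [← tmulVec_tmul]
  exact tmulVec_mono (tmul_tstar_le A hA) le_rfl

end Vectors

/-- If Tr(A) ≤ 1, a positive vector x solves the tropical inequality A ⊗ x ≤ x
iff x = A* ⊗ u for some positive vector u. -/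
theorem stmt1 {n : ℕ} (A : TMat n) (hA : tTr A ≤ 1)
    (x : Fin n → ℝ≥0) (hx : ∀ i, 0 < x i) :
    tmulVec A x ≤ x ↔
      ∃ u : Fin n → ℝ≥0, (∀ i, 0 < u i) ∧ x = tmulVec (tstar A) u := by
  constructor
  · exact fun h => ⟨x, hx, (tmulVec_tstar_eq_self h).symm⟩
  · rintro ⟨u, -, rfl⟩
    exact tmulVec_tmulVec_tstar_le hA u
end

section
/- For any n×n matrices A and B over the nonnegative reals (n ≥ 1), the following trace identity holds: Tr(A ⊕ B) = Tr(A) ⊕ max_{k=1,…,n−1} max_{m=1,…,n−k} max_{(i_1,…,i_k)} tr(A^{i_1} ⊗ B ⊗ A^{i_2} ⊗ B ⊗ ⋯ ⊗ A^{i_k} ⊗ B) ⊕ Tr(B), where the inner maximum is over all tuples of nonnegative integers (i_1, …, i_k) with i_1 + ⋯ + i_k = m. -/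
open scoped NNReal

/-!
Expanding `(A ⊕ B)^K` entrywise, every entry is attained by a single word of length `K` in the
letters `A` and `B`. On the diagonal only the cyclic class of the word matters, because
`tr (X ⊗ Y) = tr (Y ⊗ X)`. A word in `A` alone (in `B` alone) is a power of `A` (of `B`); any
other word can be rotated to end in `B`, and then it reads `A^{i_1} B ⋯ A^{i_k} B` with `k ≥ 1`
letters `B` and `m = i_1 + ⋯ + i_k ≥ 1` letters `A`, so `k + m = K ≤ n`. Conversely, every
such product is entrywise below `(A ⊕ B)^(k + m)`.
-/

section TropicalTrace

variable {n : ℕ}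

theorem tmul_assoc (A B C : TMat n) : tmul (tmul A B) C = tmul A (tmul B C) := by
  funext i j
  simp only [tmul, NNReal.finset_sup_mul, NNReal.mul_finset_sup, mul_assoc]
  exact Finset.sup_comm _ _ _

theorem tId_tmul (A : TMat n) : tmul (tId n) A = A := by
  funext i j
  refine le_antisymm (Finset.sup_le fun k _ => ?_) ?_
  · by_cases h : i = k
    · subst h; simp [tId]
    · simp [tId, h]
  · simpa [tId, tmul] using Finset.le_sup (f := fun k => tId n i k * A k j) (Finset.mem_univ i)

theorem tmul_tId (A : TMat n) : tmul A (tId n) = A := by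
  funext i j
  refine le_antisymm (Finset.sup_le fun k _ => ?_) ?_
  · by_cases h : k = j
    · subst h; simp [tId]
    · simp [tId, h]
  · simpa [tId, tmul] using Finset.le_sup (f := fun k => A i k * tId n k j) (Finset.mem_univ j)

theorem tpow_one (A : TMat n) : tpow A 1 = A :=
  tmul_tId A

theorem tpow_add (A : TMat n) (a b : ℕ) : tpow A (a + b) = tmul (tpow A a) (tpow A b) := by
  induction a with
  | zero => simp [tpow, tId_tmul]
  | succ a ih =>
    rw [Nat.add_right_comm]
    change tmul A (tpow A (a + b)) = tmul (tmul A (tpow A a)) (tpow A b)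
    rw [ih, tmul_assoc]

theorem ttr_tmul_comm (X Y : TMat n) : ttr (tmul X Y) = ttr (tmul Y X) := by
  have key : ∀ X Y : TMat n, ttr (tmul X Y) ≤ ttr (tmul Y X) := fun X Y =>
    Finset.sup_le fun i _ => Finset.sup_le fun k _ =>
      calc X i k * Y k i = Y k i * X i k := mul_comm _ _
        _ ≤ tmul Y X k k := Finset.le_sup (f := fun l => Y k l * X l k) (Finset.mem_univ i)
        _ ≤ ttr (tmul Y X) := Finset.le_sup (f := fun l => tmul Y X l l) (Finset.mem_univ k)
  exact le_antisymm (key X Y) (key Y X)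

theorem tmul_le_tmul {A A' B B' : TMat n} (hA : ∀ i j, A i j ≤ A' i j)
    (hB : ∀ i j, B i j ≤ B' i j) (i j : Fin n) : tmul A B i j ≤ tmul A' B' i j :=
  Finset.sup_le fun k _ => (mul_le_mul' (hA i k) (hB k j)).trans
    (Finset.le_sup (f := fun k => A' i k * B' k j) (Finset.mem_univ k))

theorem tpow_le_tpow {A A' : TMat n} (h : ∀ i j, A i j ≤ A' i j) (K : ℕ) (i j : Fin n) :
    tpow A K i j ≤ tpow A' K i j := by
  induction K generalizing i j with
  | zero => exact le_rfl
  | succ K ih => exact tmul_le_tmul h ih i j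

theorem ttr_le_ttr {A A' : TMat n} (h : ∀ i j, A i j ≤ A' i j) : ttr A ≤ ttr A' :=
  Finset.sup_le fun i _ => (h i i).trans (Finset.le_sup (f := fun i => A' i i) (Finset.mem_univ i))

theorem ttr_tpow_le_tTr (A : TMat n) {K : ℕ} (hK : 1 ≤ K) (hKn : K ≤ n) :
    ttr (tpow A K) ≤ tTr A :=
  Finset.le_sup (f := fun k => ttr (tpow A k)) (Finset.mem_Icc.mpr ⟨hK, hKn⟩)

theorem tTr_le_tTr {A A' : TMat n} (h : ∀ i j, A i j ≤ A' i j) : tTr A ≤ tTr A' :=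
  Finset.sup_le fun K hK => (ttr_le_ttr (tpow_le_tpow h K)).trans
    (ttr_tpow_le_tTr A' (Finset.mem_Icc.mp hK).1 (Finset.mem_Icc.mp hK).2)

theorem tchain_le_tpow_tadd (A B : TMat n) {k : ℕ} (f : Fin k → ℕ) (i j : Fin n) :
    tchain k (fun t => tmul (tpow A (f t)) B) i j ≤ tpow (tadd A B) (∑ t, f t + k) i j := by
  induction k generalizing i j with
  | zero => exact le_rfl
  | succ k ih =>
    have hblock : ∀ i j, tmul (tpow A (f 0)) B i j ≤ tpow (tadd A B) (f 0 + 1) i j := by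
      rw [tpow_add, tpow_one]
      exact tmul_le_tmul (tpow_le_tpow (fun _ _ => le_sup_left) _) fun _ _ => le_sup_right
    have hlen : ∑ t, f t + (k + 1) = (f 0 + 1) + (∑ t : Fin k, f t.succ + k) := by
      rw [Fin.sum_univ_succ]; ring
    rw [hlen, tpow_add]
    exact tmul_le_tmul hblock (ih fun t => f t.succ) i j

noncomputable def wordMat (A B : TMat n) : List Bool → TMat n
  | [] => tId n
  | b :: w => tmul (cond b B A) (wordMat A B w)

theorem wordMat_append (A B : TMat n) (v w : List Bool) :
    wordMat A B (v ++ w) = tmul (wordMat A B v) (wordMat A B w) := by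
  induction v with
  | nil => exact (tId_tmul _).symm
  | cons b v ih => simp only [List.cons_append, wordMat, ih, tmul_assoc]

theorem wordMat_replicate (A B : TMat n) (b : Bool) (K : ℕ) :
    wordMat A B (List.replicate K b) = tpow (cond b B A) K := by
  induction K with
  | zero => rfl
  | succ K ih => simp only [List.replicate_succ, wordMat, ih, tpow]

theorem ttr_wordMat_append_comm (A B : TMat n) (v w : List Bool) :
    ttr (wordMat A B (v ++ w)) = ttr (wordMat A B (w ++ v)) := by
  rw [wordMat_append, ttr_tmul_comm, ← wordMat_append]

theorem exists_wordMat_ge (A B : TMat n) (K : ℕ) (i j : Fin n) :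
    ∃ w : List Bool, w.length = K ∧ tpow (tadd A B) K i j ≤ wordMat A B w i j := by
  induction K generalizing i with
  | zero => exact ⟨[], rfl, le_rfl⟩
  | succ K ih =>
    obtain ⟨k, -, hk⟩ := Finset.exists_mem_eq_sup Finset.univ ⟨i, Finset.mem_univ i⟩
      fun k => tadd A B i k * tpow (tadd A B) K k j
    obtain ⟨w, hw, hle⟩ := ih k
    obtain ⟨b, hb⟩ : ∃ b : Bool, tadd A B i k = cond b B A i k :=
      (max_choice (A i k) (B i k)).elim (fun h => ⟨false, h⟩) fun h => ⟨true, h⟩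
    refine ⟨b :: w, by simp [hw], ?_⟩
    calc tpow (tadd A B) (K + 1) i j = cond b B A i k * tpow (tadd A B) K k j := hb ▸ hk
      _ ≤ cond b B A i k * wordMat A B w k j := mul_le_mul_of_nonneg_left hle zero_le
      _ ≤ wordMat A B (b :: w) i j :=
        Finset.le_sup (f := fun l => cond b B A i l * wordMat A B w l j) (Finset.mem_univ k)

def blockWord (g : List ℕ) : List Bool :=
  g.flatMap fun i => List.replicate i false ++ [true]

theorem wordMat_blockWord (A B : TMat n) (g : List ℕ) :
    wordMat A B (blockWord g) = tchain g.length fun t => tmul (tpow A (g.get t)) B := by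
  induction g with
  | nil => rfl
  | cons i g ih =>
    rw [blockWord, List.flatMap_cons, ← blockWord, wordMat_append, wordMat_append,
      wordMat_replicate, ih, wordMat, wordMat, tmul_tId]
    rfl

theorem count_true_blockWord (g : List ℕ) : (blockWord g).count true = g.length := by
  simp [blockWord, List.count_flatMap, Function.comp_def, List.count_replicate]

theorem count_false_blockWord (g : List ℕ) : (blockWord g).count false = g.sum := by
  simp [blockWord, List.count_flatMap, Function.comp_def]

theorem exists_blockWord_eq_append_true (w : List Bool) : ∃ g, blockWord g = w ++ [true] := by
  induction w with
  | nil => exact ⟨[0], rfl⟩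
  | cons b w ih =>
    obtain ⟨g, hg⟩ := ih
    cases b with
    | true => exact ⟨0 :: g, by simp [blockWord, ← hg]⟩
    | false =>
      cases g with
      | nil => simp [blockWord] at hg
      | cons i g => exact ⟨(i + 1) :: g, by simp [blockWord, List.replicate_succ, ← hg]⟩

noncomputable def mixedTr (A B : TMat n) : ℝ≥0 :=
  (Finset.Icc 1 (n - 1)).sup fun k => (Finset.Icc 1 (n - k)).sup fun m => rkm A B k m

theorem rkm_le_mixedTr (A B : TMat n) {k m : ℕ} (hk : 1 ≤ k) (hm : 1 ≤ m) (hkm : k + m ≤ n) :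
    rkm A B k m ≤ mixedTr A B :=
  (Finset.le_sup (f := fun m => rkm A B k m) (Finset.mem_Icc.mpr ⟨hm, by omega⟩)).trans
    (Finset.le_sup (f := fun k => (Finset.Icc 1 (n - k)).sup fun m => rkm A B k m)
      (Finset.mem_Icc.mpr ⟨hk, by omega⟩))

theorem ttr_tchain_le_rkm (A B : TMat n) (g : List ℕ) :
    ttr (tchain g.length fun t => tmul (tpow A (g.get t)) B) ≤ rkm A B g.length g.sum :=
  Finset.le_sup (f := fun f : Fin g.length → Fin (g.sum + 1) =>
      ttr (tchain g.length fun t => tmul (tpow A (f t : ℕ)) B))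
    (b := fun t => ⟨g.get t, Nat.lt_succ_of_le (List.le_sum_of_mem (List.get_mem g t))⟩)
    (Finset.mem_filter.mpr ⟨Finset.mem_univ _, by
      change ∑ t, g.get t = g.sum
      rw [← List.sum_ofFn, List.ofFn_get]⟩)

theorem rkm_le_tTr_tadd (A B : TMat n) {k m : ℕ} (hk : 1 ≤ k) (hkm : k + m ≤ n) :
    rkm A B k m ≤ tTr (tadd A B) :=
  Finset.sup_le fun f hf => by
    have hsum : ∑ t, (f t : ℕ) + k = k + m := by
      rw [(Finset.mem_filter.mp hf).2, add_comm]
    refine (ttr_le_ttr (tchain_le_tpow_tadd A B (fun t => (f t : ℕ)))).trans ?_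
    rw [hsum]
    exact ttr_tpow_le_tTr _ (by omega) hkm

theorem ttr_wordMat_le (A B : TMat n) (w : List Bool) (hw : 1 ≤ w.length) (hwn : w.length ≤ n) :
    ttr (wordMat A B w) ≤ tTr A ⊔ mixedTr A B ⊔ tTr B := by
  by_cases hB : true ∈ w
  · by_cases hA : false ∈ w
    · obtain ⟨u, v, rfl⟩ := List.append_of_mem hB
      obtain ⟨g, hg⟩ := exists_blockWord_eq_append_true (v ++ u)
      have hperm : (blockWord g).Perm (u ++ true :: v) := by
        rw [hg, List.append_assoc]
        exact List.perm_append_comm.trans (by simp)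
      have hk : g.length = (u ++ true :: v).count true := by
        rw [← count_true_blockWord, hperm.count_eq]
      have hm : g.sum = (u ++ true :: v).count false := by
        rw [← count_false_blockWord, hperm.count_eq]
      rw [List.append_cons, ttr_wordMat_append_comm, ← List.append_assoc, ← hg,
        wordMat_blockWord]
      refine (ttr_tchain_le_rkm A B g).trans (le_sup_left.trans' (le_sup_right.trans' ?_))
      have hlen := List.count_true_add_count_false (u ++ true :: v)
      have hA' := List.count_pos_iff.mpr hA
      have hB' := List.count_pos_iff.mpr hB
      exact rkm_le_mixedTr A B (by omega) (by omega) (by omega)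
    · have hw' : w = List.replicate w.length true := by
        simpa [List.eq_replicate_iff] using hA
      rw [hw', wordMat_replicate]
      exact le_sup_right.trans' (ttr_tpow_le_tTr B hw hwn)
  · have hw' : w = List.replicate w.length false := by
      simpa [List.eq_replicate_iff] using hB
    rw [hw', wordMat_replicate]
    exact (le_sup_left.trans le_sup_left).trans' (ttr_tpow_le_tTr A hw hwn)

theorem tTr_tadd_le (A B : TMat n) : tTr (tadd A B) ≤ tTr A ⊔ mixedTr A B ⊔ tTr B :=
  Finset.sup_le fun K hK => Finset.sup_le fun i _ => by
    obtain ⟨w, rfl, hle⟩ := exists_wordMat_ge A B K i i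
    obtain ⟨hK, hKn⟩ := Finset.mem_Icc.mp hK
    exact hle.trans ((Finset.le_sup (f := fun i => wordMat A B w i i) (Finset.mem_univ i)).trans
      (ttr_wordMat_le A B w hK hKn))

theorem le_tTr_tadd (A B : TMat n) : tTr A ⊔ mixedTr A B ⊔ tTr B ≤ tTr (tadd A B) :=
  sup_le (sup_le (tTr_le_tTr fun _ _ => le_sup_left)
    (Finset.sup_le fun k hk => Finset.sup_le fun m hm => by
      rw [Finset.mem_Icc] at hk hm
      exact rkm_le_tTr_tadd A B hk.1 (by omega)))
    (tTr_le_tTr fun _ _ => le_sup_right)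

end TropicalTrace

theorem stmt4_general {n : ℕ} (A B : TMat n) :
    tTr (tadd A B) =
      tTr A ⊔
        ((Finset.Icc 1 (n - 1)).sup fun k =>
          (Finset.Icc 1 (n - k)).sup fun m =>
            (tuples k m).sup fun f =>
              ttr (tchain k fun t => tmul (tpow A (f t : ℕ)) B)) ⊔
        tTr B :=
  le_antisymm (tTr_tadd_le A B) (le_tTr_tadd A B)

/-- Trace identity: Tr(A ⊕ B) = Tr(A) ⊕ max_{k=1..n-1} max_{m=1..n-k} max over tuples
(i_1,…,i_k) with i_1+⋯+i_k = m of tr(A^{i_1} B ⋯ A^{i_k} B) ⊕ Tr(B). -/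
theorem stmt4 {n : ℕ} (hn : 1 ≤ n) (A B : TMat n) :
    tTr (tadd A B) =
      tTr A ⊔
        ((Finset.Icc 1 (n - 1)).sup fun k =>
          (Finset.Icc 1 (n - k)).sup fun m =>
            (tuples k m).sup fun f =>
              ttr (tchain k fun t => tmul (tpow A (f t : ℕ)) B)) ⊔
        tTr B :=
  stmt4_general A B
end

section
/- Let B and C be n×n matrices over the nonnegative reals with Tr(C) ≤ 1, and let β > 0. Define μ = max_{k=1,…,n} (tr(B^k))^{1/k} and θ = max over k = 1,…,n−1, m = 1,…,n−k, and tuples of nonnegative integers (i_1,…,i_k) with i_1+⋯+i_k = m, of (tr(B^{i_1} ⊗ C ⊗ ⋯ ⊗ B^{i_k} ⊗ C))^{1/m}. Then Tr(β^{-1}B ⊕ C) ≤ 1 if and only if β ≥ max(μ, θ). -/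
/-!
Put `X = β⁻¹ B`. Scaling `B` by `β⁻¹` scales `μ` and `θ` by `β⁻¹`, so `max (μ, θ) ≤ β` says that
`tr (X^k) ≤ 1` for `1 ≤ k ≤ n` and `tr (X^{i₁} C ⋯ X^{i_k} C) ≤ 1` whenever `k + Σ i ≤ n`.
A diagonal entry of `(X ⊕ C)^k` is the corresponding entry of the product of some word of
length `k` in the letters `X` and `C`, and every such word product is bounded by `(X ⊕ C)^k`;
this gives one direction. Conversely, a cyclic rotation, which does not change the trace, brings
a word either to `X^k` or to a chain `X^{i₁} C ⋯ X^{i_k} C`, whose trace is bounded through `μ`,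
`θ` or `Tr C ≤ 1`.
-/

open scoped NNReal

namespace List

variable {α : Type*}

theorem exists_eq_flatMap_append_replicate {x c : α} (L : List α) (h : ∀ a ∈ L, a = x ∨ a = c) :
    ∃ (is : List ℕ) (r : ℕ), L = is.flatMap (fun i => replicate i x ++ [c]) ++ replicate r x := by
  induction L using List.reverseRecOn with
  | nil => exact ⟨[], 0, rfl⟩
  | append_singleton L a ih =>
    obtain ⟨is, r, rfl⟩ := ih fun b hb => h b (mem_append_left _ hb)
    rcases h a (mem_append_right _ (mem_singleton_self a)) with rfl | rfl
    · exact ⟨is, r + 1, by simp [replicate_succ']⟩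
    · exact ⟨is ++ [r], 0, by simp⟩

theorem length_flatMap_replicate_append_singleton (x c : α) (is : List ℕ) :
    (is.flatMap fun i => replicate i x ++ [c]).length = is.sum + is.length := by
  induction is with
  | nil => rfl
  | cons i is ih => simp [ih]; omega

theorem flatMap_replicate_append_singleton_of_sum_eq_zero (x c : α) {is : List ℕ}
    (h : is.sum = 0) : (is.flatMap fun i => replicate i x ++ [c]) = replicate is.length c := by
  induction is with
  | nil => rfl
  | cons i is ih =>
    obtain ⟨rfl, hs⟩ : i = 0 ∧ is.sum = 0 := by simpa using h
    simp [ih hs, replicate_succ]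

end List

namespace NNReal

theorem rpow_one_div_le_one_iff {x : ℝ≥0} {k : ℕ} (hk : k ≠ 0) : x ^ ((1 : ℝ) / k) ≤ 1 ↔ x ≤ 1 := by
  rw [one_div, rpow_inv_le_iff (by positivity), one_rpow]

theorem pow_mul_rpow_one_div (a x : ℝ≥0) {k : ℕ} (hk : k ≠ 0) :
    (a ^ k * x) ^ ((1 : ℝ) / k) = a * x ^ ((1 : ℝ) / k) := by
  rw [mul_rpow, one_div, pow_rpow_inv_natCast a hk]

end NNReal

namespace TMat

open Finset

variable {n : ℕ}

theorem tmul_assoc (A B C : TMat n) : tmul (tmul A B) C = tmul A (tmul B C) := by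
  funext i j
  simp only [tmul, NNReal.finset_sup_mul, NNReal.mul_finset_sup, mul_assoc]
  exact Finset.sup_comm _ _ _

theorem tId_tmul (A : TMat n) : tmul (tId n) A = A := by
  funext i j
  refine le_antisymm (Finset.sup_le fun k _ => ?_) ?_
  · by_cases h : i = k <;> simp [tId, h]
  · exact le_trans (by simp [tId]) (le_sup (f := fun k => tId n i k * A k j) (mem_univ i))

theorem tmul_tId (A : TMat n) : tmul A (tId n) = A := by
  funext i j
  refine le_antisymm (Finset.sup_le fun k _ => ?_) ?_
  · by_cases h : k = j <;> simp [tId, h]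
  · exact le_trans (by simp [tId]) (le_sup (f := fun k => A i k * tId n k j) (mem_univ j))

theorem tmul_mono {A B A' B' : TMat n} (hA : ∀ i j, A i j ≤ A' i j) (hB : ∀ i j, B i j ≤ B' i j)
    (i j : Fin n) : tmul A B i j ≤ tmul A' B' i j :=
  Finset.sup_mono_fun fun k _ => mul_le_mul' (hA i k) (hB k j)

theorem ttr_tmul_comm (A B : TMat n) : ttr (tmul A B) = ttr (tmul B A) := by
  simp only [ttr, tmul]
  rw [Finset.sup_comm]
  simp only [mul_comm]

theorem tsmul_tsmul (a b : ℝ≥0) (A : TMat n) : tsmul a (tsmul b A) = tsmul (a * b) A := by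
  funext i j
  exact (mul_assoc a b _).symm

theorem tmul_tsmul (a : ℝ≥0) (A B : TMat n) : tmul A (tsmul a B) = tsmul a (tmul A B) := by
  funext i j
  simp only [tmul, tsmul, NNReal.mul_finset_sup, mul_left_comm]

theorem tsmul_tmul (a : ℝ≥0) (A B : TMat n) : tmul (tsmul a A) B = tsmul a (tmul A B) := by
  funext i j
  simp only [tmul, tsmul, NNReal.mul_finset_sup, mul_assoc]

theorem ttr_mono {A B : TMat n} (h : ∀ i j, A i j ≤ B i j) : ttr A ≤ ttr B :=
  Finset.sup_mono_fun fun i _ => h i i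

theorem ttr_tsmul (a : ℝ≥0) (A : TMat n) : ttr (tsmul a A) = a * ttr A :=
  (NNReal.mul_finset_sup a _ _).symm

theorem tpow_tsmul (a : ℝ≥0) (A : TMat n) (k : ℕ) :
    tpow (tsmul a A) k = tsmul (a ^ k) (tpow A k) := by
  induction k with
  | zero => funext i j; simp [tpow, tsmul]
  | succ k ih => rw [tpow, tpow, ih, tmul_tsmul, tsmul_tmul, tsmul_tsmul, ← pow_succ]

theorem tchain_blocks_tsmul (a : ℝ≥0) (A C : TMat n) :
    ∀ (k : ℕ) (f : Fin k → ℕ), tchain k (fun t => tmul (tpow (tsmul a A) (f t)) C) =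
      tsmul (a ^ ∑ t, f t) (tchain k fun t => tmul (tpow A (f t)) C)
  | 0, _ => by funext i j; simp [tchain, tsmul]
  | k + 1, f => by
    rw [tchain, tchain, tchain_blocks_tsmul a A C k, tpow_tsmul, tsmul_tmul, tsmul_tmul,
      tmul_tsmul, tsmul_tsmul, Fin.sum_univ_succ, pow_add]

noncomputable def tlistProd : List (TMat n) → TMat n
  | [] => tId n
  | A :: L => tmul A (tlistProd L)

theorem tlistProd_append (L₁ L₂ : List (TMat n)) :
    tlistProd (L₁ ++ L₂) = tmul (tlistProd L₁) (tlistProd L₂) := by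
  induction L₁ with
  | nil => exact (tId_tmul _).symm
  | cons A L ih => rw [List.cons_append, tlistProd, tlistProd, ih, tmul_assoc]

theorem tlistProd_singleton (A : TMat n) : tlistProd [A] = A := tmul_tId A

theorem tlistProd_replicate (A : TMat n) (k : ℕ) : tlistProd (List.replicate k A) = tpow A k := by
  induction k with
  | zero => rfl
  | succ k ih => rw [List.replicate_succ, tlistProd, ih, tpow]

theorem ttr_tlistProd_append_comm (L₁ L₂ : List (TMat n)) :
    ttr (tlistProd (L₁ ++ L₂)) = ttr (tlistProd (L₂ ++ L₁)) := by
  rw [tlistProd_append, tlistProd_append, ttr_tmul_comm]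

theorem tlistProd_le_tpow {M : TMat n} :
    ∀ L : List (TMat n), (∀ A ∈ L, ∀ i j, A i j ≤ M i j) →
      ∀ i j, tlistProd L i j ≤ tpow M L.length i j
  | [], _ => fun _ _ => le_rfl
  | A :: L, h => tmul_mono (h A List.mem_cons_self)
      (tlistProd_le_tpow L fun B hB => h B (List.mem_cons_of_mem A hB))

theorem exists_word_tpow_tadd_le (X Y : TMat n) :
    ∀ (k : ℕ) (i j : Fin n), ∃ L : List (TMat n), L.length = k ∧ (∀ A ∈ L, A = X ∨ A = Y) ∧
      tpow (tadd X Y) k i j ≤ tlistProd L i j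
  | 0, _, _ => ⟨[], rfl, by simp, le_rfl⟩
  | k + 1, i, j => by
    obtain ⟨l, -, hl⟩ := exists_mem_eq_sup univ ⟨i, mem_univ i⟩
      fun l => tadd X Y i l * tpow (tadd X Y) k l j
    obtain ⟨L, hlen, hL, hle⟩ := exists_word_tpow_tadd_le X Y k l j
    obtain ⟨Z, hZ, hXY⟩ : ∃ Z, (Z = X ∨ Z = Y) ∧ tadd X Y i l = Z i l := by
      rcases le_total (X i l) (Y i l) with h | h
      · exact ⟨Y, Or.inr rfl, sup_eq_right.2 h⟩
      · exact ⟨X, Or.inl rfl, sup_eq_left.2 h⟩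
    refine ⟨Z :: L, by simp [hlen], ?_, ?_⟩
    · simpa [hZ] using hL
    · calc tpow (tadd X Y) (k + 1) i j = Z i l * tpow (tadd X Y) k l j := by
            rw [← hXY]; exact hl
        _ ≤ Z i l * tlistProd L l j := mul_le_mul_right hle _
        _ ≤ tlistProd (Z :: L) i j := le_sup (f := fun l => Z i l * tlistProd L l j) (mem_univ l)

theorem tchain_blocks_eq_tlistProd_flatMap (X C : TMat n) :
    ∀ (k : ℕ) (f : Fin k → ℕ), tchain k (fun t => tmul (tpow X (f t)) C) =
      tlistProd ((List.ofFn f).flatMap fun i => List.replicate i X ++ [C])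
  | 0, _ => rfl
  | k + 1, f => by
    rw [tchain, tchain_blocks_eq_tlistProd_flatMap X C k, List.ofFn_succ, List.flatMap_cons,
      tlistProd_append, tlistProd_append, tlistProd_replicate, tlistProd_singleton, tmul_assoc]

theorem specRad_le_one_iff (A : TMat n) :
    specRad A ≤ 1 ↔ ∀ k ∈ Icc 1 n, ttr (tpow A k) ≤ 1 := by
  simp only [specRad, Finset.sup_le_iff]
  exact forall₂_congr fun k hk => NNReal.rpow_one_div_le_one_iff (by grind)

theorem sigmaC_le_one_iff (A C : TMat n) :
    sigmaC A C ≤ 1 ↔ ∀ k ∈ Icc 1 (n - 1), ∀ m ∈ Icc 1 (n - k), ∀ f ∈ tuples k m,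
      ttr (tchain k fun t => tmul (tpow A (f t)) C) ≤ 1 := by
  simp only [sigmaC, Finset.sup_le_iff]
  refine forall₂_congr fun k _ => forall₂_congr fun m hm => forall₂_congr fun f _ => ?_
  exact NNReal.rpow_one_div_le_one_iff (by grind)

theorem specRad_tsmul (a : ℝ≥0) (A : TMat n) : specRad (tsmul a A) = a * specRad A := by
  simp only [specRad, NNReal.mul_finset_sup]
  refine Finset.sup_congr rfl fun k hk => ?_
  rw [tpow_tsmul, ttr_tsmul, NNReal.pow_mul_rpow_one_div a _ (by grind)]

theorem sigmaC_tsmul (a : ℝ≥0) (A C : TMat n) : sigmaC (tsmul a A) C = a * sigmaC A C := by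
  simp only [sigmaC, NNReal.mul_finset_sup]
  refine Finset.sup_congr rfl fun k _ => Finset.sup_congr rfl fun m hm =>
    Finset.sup_congr rfl fun f hf => ?_
  rw [tchain_blocks_tsmul, ttr_tsmul, (mem_filter.1 hf).2,
    NNReal.pow_mul_rpow_one_div a _ (by grind)]

theorem ttr_tlistProd_blocks_le_one {X C : TMat n} (hXC : sigmaC X C ≤ 1) (hC : tTr C ≤ 1)
    {js : List ℕ} (hne : js ≠ []) (hn : js.sum + js.length ≤ n) :
    ttr (tlistProd (js.flatMap fun i => List.replicate i X ++ [C])) ≤ 1 := by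
  have hlen : 1 ≤ js.length := List.length_pos_iff.2 hne
  by_cases hs : js.sum = 0
  · rw [List.flatMap_replicate_append_singleton_of_sum_eq_zero X C hs, tlistProd_replicate]
    exact (le_sup (f := fun k => ttr (tpow C k)) (mem_Icc.2 ⟨hlen, by omega⟩)).trans hC
  · let f : Fin js.length → Fin (js.sum + 1) := fun t => ⟨js[t], Nat.lt_succ_of_le
      (List.le_sum_of_mem (List.getElem_mem _))⟩
    have hf : f ∈ tuples js.length js.sum := by
      simp [tuples, f, ← List.sum_ofFn]
    have key : ttr (tchain js.length fun t => tmul (tpow X js[(t : ℕ)]) C) ≤ 1 :=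
      (sigmaC_le_one_iff X C).1 hXC js.length (mem_Icc.2 ⟨hlen, by omega⟩) js.sum
        (mem_Icc.2 ⟨by omega, by omega⟩) f hf
    rwa [tchain_blocks_eq_tlistProd_flatMap, List.ofFn_getElem] at key

theorem ttr_tlistProd_le_one {X C : TMat n} (hX : specRad X ≤ 1) (hXC : sigmaC X C ≤ 1)
    (hC : tTr C ≤ 1) {L : List (TMat n)} (hL : ∀ A ∈ L, A = X ∨ A = C) (h1 : 1 ≤ L.length)
    (hn : L.length ≤ n) : ttr (tlistProd L) ≤ 1 := by
  obtain ⟨is, r, rfl⟩ := L.exists_eq_flatMap_append_replicate hL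
  simp only [List.length_append, List.length_flatMap_replicate_append_singleton,
    List.length_replicate] at h1 hn
  rcases is with _ | ⟨i, is⟩
  · rw [List.flatMap_nil, List.nil_append, tlistProd_replicate]
    exact (specRad_le_one_iff X).1 hX r (mem_Icc.2 ⟨by simpa using h1, by simpa using hn⟩)
  · have hrot : List.replicate r X ++ (i :: is).flatMap (fun i => List.replicate i X ++ [C]) =
        ((r + i) :: is).flatMap (fun i => List.replicate i X ++ [C]) := by
      simp [← List.replicate_append_replicate]
    rw [ttr_tlistProd_append_comm, hrot]
    exact ttr_tlistProd_blocks_le_one hXC hC (List.cons_ne_nil _ _) (by simp at hn ⊢; omega)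

theorem tTr_tadd_le_one_iff {X C : TMat n} (hC : tTr C ≤ 1) :
    tTr (tadd X C) ≤ 1 ↔ specRad X ≤ 1 ∧ sigmaC X C ≤ 1 := by
  constructor
  · intro h
    have hk : ∀ k ∈ Icc 1 n, ttr (tpow (tadd X C) k) ≤ 1 := Finset.sup_le_iff.1 h
    have hletter : ∀ A, A = X ∨ A = C → ∀ i j, A i j ≤ tadd X C i j := by
      rintro A (rfl | rfl) i j
      exacts [le_sup_left, le_sup_right]
    refine ⟨(specRad_le_one_iff X).2 fun k hk' => ?_, (sigmaC_le_one_iff X C).2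
      fun k hk' m hm f hf => ?_⟩
    · have hle := tlistProd_le_tpow (List.replicate k X) fun A hA =>
        hletter A (Or.inl (List.eq_of_mem_replicate hA))
      rw [tlistProd_replicate, List.length_replicate] at hle
      exact (ttr_mono hle).trans (hk k hk')
    · rw [tchain_blocks_eq_tlistProd_flatMap]
      refine (ttr_mono (tlistProd_le_tpow _ fun A hA => hletter A ?_)).trans (hk _ ?_)
      · simp only [List.mem_flatMap, List.mem_append, List.mem_replicate, List.mem_singleton] at hA
        tauto
      · rw [List.length_flatMap_replicate_append_singleton, List.sum_ofFn, List.length_ofFn,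
          (mem_filter.1 hf).2]
        grind
  · rintro ⟨hX, hXC⟩
    refine Finset.sup_le fun k hk => Finset.sup_le fun i _ => ?_
    obtain ⟨L, rfl, hL, hle⟩ := exists_word_tpow_tadd_le X C k i i
    exact hle.trans ((le_sup (f := fun i => tlistProd L i i) (mem_univ i)).trans
      (ttr_tlistProd_le_one hX hXC hC hL (mem_Icc.1 hk).1 (mem_Icc.1 hk).2))

end TMat

/-- With Tr(C) ≤ 1 and β > 0: Tr(β⁻¹B ⊕ C) ≤ 1 iff β ≥ max(μ, θ), where μ is the
spectral radius of B and θ = max_{k,m,tuples} (tr(B^{i_1} C ⋯ B^{i_k} C))^{1/m}. -/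
theorem stmt10 {n : ℕ} (B C : TMat n) (hC : tTr C ≤ 1) (β : ℝ≥0) (hβ : 0 < β) :
    tTr (tadd (tsmul β⁻¹ B) C) ≤ 1 ↔ specRad B ⊔ sigmaC B C ≤ β := by
  rw [TMat.tTr_tadd_le_one_iff hC, ← sup_le_iff, TMat.specRad_tsmul, TMat.sigmaC_tsmul,
    max_mul_mul_left, inv_mul_le_iff₀ hβ, mul_one]
end

section
/- Let A, B, C be n×n matrices over the nonnegative reals and let s, t > 0. Then G(s) = t if and only if H(t) = s; in other words, the functions G and H are mutually inverse on positive values. -/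
open scoped NNReal

lemma key1 (r s t : ℝ≥0) (l m : ℕ) (hl : 0 < l) (hs : 0 < s) :
    r ^ ((1:ℝ)/l) * s ^ (-(m:ℝ)/l) ≤ t ↔ r ≤ t ^ (l:ℝ) * s ^ (m:ℝ) := by
  have hl' : (0:ℝ) < l := by exact_mod_cast hl
  have h1 : -(m:ℝ)/l = -((m:ℝ)/l) := by ring
  rw [h1, NNReal.rpow_neg, ← div_eq_mul_inv, div_le_iff₀ (NNReal.rpow_pos hs),
    ← NNReal.rpow_le_rpow_iff hl', NNReal.mul_rpow, ← NNReal.rpow_mul, ← NNReal.rpow_mul,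
    one_div_mul_cancel hl'.ne', div_mul_cancel₀ _ hl'.ne', NNReal.rpow_one]

lemma key2 (r s t : ℝ≥0) (l m : ℕ) (hl : 0 < l) (hs : 0 < s) :
    t ≤ r ^ ((1:ℝ)/l) * s ^ (-(m:ℝ)/l) ↔ t ^ (l:ℝ) * s ^ (m:ℝ) ≤ r := by
  have hl' : (0:ℝ) < l := by exact_mod_cast hl
  have h1 : -(m:ℝ)/l = -((m:ℝ)/l) := by ring
  rw [h1, NNReal.rpow_neg, ← div_eq_mul_inv, le_div_iff₀ (NNReal.rpow_pos hs),
    ← NNReal.rpow_le_rpow_iff hl', NNReal.mul_rpow, ← NNReal.rpow_mul, ← NNReal.rpow_mul,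
    one_div_mul_cancel hl'.ne', div_mul_cancel₀ _ hl'.ne', NNReal.rpow_one]

lemma keyeq (r s t : ℝ≥0) (l m : ℕ) (hl : 0 < l) (hs : 0 < s) :
    r ^ ((1:ℝ)/l) * s ^ (-(m:ℝ)/l) = t ↔ r = t ^ (l:ℝ) * s ^ (m:ℝ) := by
  rw [le_antisymm_iff, le_antisymm_iff, key1 r s t l m hl hs, key2 r s t l m hl hs, and_comm]

lemma supex {ι : Type*} (s : Finset ι) (f : ι → ℝ≥0) (c : ℝ≥0) (hc : c ≠ 0)
    (h : s.sup f = c) : ∃ a ∈ s, f a = c := by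
  rcases s.eq_empty_or_nonempty with rfl | hne
  · simp at h; exact absurd h.symm hc
  · obtain ⟨a, ha, hfa⟩ := Finset.exists_mem_eq_sup s hne f
    exact ⟨a, ha, by rw [← hfa, h]⟩

lemma GH_le_iff {n : ℕ} (A B C : TMat n) (s t : ℝ≥0) (hs : 0 < s) (ht : 0 < t) :
    Gfun A B C s ≤ t ↔ Hfun A B C t ≤ s := by
  unfold Gfun Hfun
  simp only [Finset.sup_le_iff, Finset.mem_Icc]
  constructor
  · intro h k hk m hm l hl
    rw [key1 _ _ _ m l hm.1 ht, mul_comm]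
    rw [← key1 _ _ _ l m hl.1 hs]
    exact h k hk m hm l hl
  · intro h k hk m hm l hl
    rw [key1 _ _ _ l m hl.1 hs, ← mul_comm]
    rw [← key1 _ _ _ m l hm.1 ht]
    exact h k hk m hm l hl


/-- The functions G and H are mutually inverse on positive values:
G(s) = t iff H(t) = s, for s, t > 0. -/
theorem stmt13 {n : ℕ} (A B C : TMat n) (s t : ℝ≥0) (hs : 0 < s) (ht : 0 < t) :
    Gfun A B C s = t ↔ Hfun A B C t = s := by
  constructor
  · intro h
    have hH : Hfun A B C t ≤ s := (GH_le_iff A B C s t hs ht).1 h.le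
    obtain ⟨k, hk, h2⟩ := supex _ _ _ ht.ne' h
    obtain ⟨m, hm, h3⟩ := supex _ _ _ ht.ne' h2
    obtain ⟨l, hl, h4⟩ := supex _ _ _ ht.ne' h3
    rw [Finset.mem_Icc] at hm hl
    have hr : rklm A B C k l m = t ^ (l:ℝ) * s ^ (m:ℝ) :=
      (keyeq _ _ _ l m hl.1 hs).1 h4
    have h5 : rklm A B C k l m ^ ((1:ℝ)/m) * t ^ (-(l:ℝ)/m) = s := by
      rw [keyeq _ _ _ m l hm.1 ht, hr, mul_comm]
    refine le_antisymm hH ?_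
    calc s = rklm A B C k l m ^ ((1:ℝ)/m) * t ^ (-(l:ℝ)/m) := h5.symm
      _ ≤ (Finset.Icc 1 k).sup fun l =>
            rklm A B C k l m ^ ((1:ℝ)/m) * t ^ (-(l:ℝ)/m) :=
          Finset.le_sup (f := fun l => rklm A B C k l m ^ ((1:ℝ)/m) * t ^ (-(l:ℝ)/m))
            (Finset.mem_Icc.2 hl)
      _ ≤ (Finset.Icc 1 (n - k)).sup fun m => (Finset.Icc 1 k).sup fun l =>
            rklm A B C k l m ^ ((1:ℝ)/m) * t ^ (-(l:ℝ)/m) :=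
          Finset.le_sup (f := fun m => (Finset.Icc 1 k).sup fun l =>
            rklm A B C k l m ^ ((1:ℝ)/m) * t ^ (-(l:ℝ)/m)) (Finset.mem_Icc.2 hm)
      _ ≤ Hfun A B C t := Finset.le_sup (f := fun k =>
            (Finset.Icc 1 (n - k)).sup fun m => (Finset.Icc 1 k).sup fun l =>
            rklm A B C k l m ^ ((1:ℝ)/m) * t ^ (-(l:ℝ)/m)) hk
  · intro h
    have hG : Gfun A B C s ≤ t := (GH_le_iff A B C s t hs ht).2 h.le
    obtain ⟨k, hk, h2⟩ := supex _ _ _ hs.ne' h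
    obtain ⟨m, hm, h3⟩ := supex _ _ _ hs.ne' h2
    obtain ⟨l, hl, h4⟩ := supex _ _ _ hs.ne' h3
    rw [Finset.mem_Icc] at hm hl
    have hr : rklm A B C k l m = s ^ (m:ℝ) * t ^ (l:ℝ) :=
      (keyeq _ _ _ m l hm.1 ht).1 h4
    have h5 : rklm A B C k l m ^ ((1:ℝ)/l) * s ^ (-(m:ℝ)/l) = t := by
      rw [keyeq _ _ _ l m hl.1 hs, hr, mul_comm]
    refine le_antisymm hG ?_
    calc t = rklm A B C k l m ^ ((1:ℝ)/l) * s ^ (-(m:ℝ)/l) := h5.symm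
      _ ≤ (Finset.Icc 1 k).sup fun l =>
            rklm A B C k l m ^ ((1:ℝ)/l) * s ^ (-(m:ℝ)/l) :=
          Finset.le_sup (f := fun l => rklm A B C k l m ^ ((1:ℝ)/l) * s ^ (-(m:ℝ)/l))
            (Finset.mem_Icc.2 hl)
      _ ≤ (Finset.Icc 1 (n - k)).sup fun m => (Finset.Icc 1 k).sup fun l =>
            rklm A B C k l m ^ ((1:ℝ)/l) * s ^ (-(m:ℝ)/l) :=
          Finset.le_sup (f := fun m => (Finset.Icc 1 k).sup fun l =>
            rklm A B C k l m ^ ((1:ℝ)/l) * s ^ (-(m:ℝ)/l)) (Finset.mem_Icc.2 hm)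
      _ ≤ Gfun A B C s := Finset.le_sup (f := fun k =>
            (Finset.Icc 1 (n - k)).sup fun m => (Finset.Icc 1 k).sup fun l =>
            rklm A B C k l m ^ ((1:ℝ)/l) * s ^ (-(m:ℝ)/l)) hk
end
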